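/- arXiv:2602.02317 — 3 statements merged into one kernel-verified Lean document; each statement's English description precedes it below -/
import Mathlib

section
/- Let X ⊆ ℝ^d be a nonempty compact convex set, Ω a set, I a countable index set, θ_i : Ω → Ω arbitrary maps, and p_i : Ω → [0,∞) with ∑_{i∈I} p_i(ω) = 1 for every ω ∈ Ω. For each ω ∈ Ω let g_ω : ℝ^d → ℝ^d be a C³ map with g_ω(X) ⊆ X, and suppose there is 0 ≤ λ < 1 such that the numbers L_k = sup_{ω∈Ω} sup_{x∈X} ‖D^k g_ω(x)‖ (k = 1,2,3) satisfy max{L₁ + L₂ + L₃, L₁² + 3·L₁·L₂, L₁³} ≤ λ. Let K be the sectional transfer operator (Kν)_ω = ∑_{i∈I} p_i(ω)·(g_{θ_i(ω)})_* ν_{θ_i(ω)}. Then for all sections σ, σ′ : Ω → M₁(X) and every D ≥ 0: if N₃(σ_θ, σ′_θ) ≤ D for every θ ∈ Ω, then N₃((Kσ)_ω, (Kσ′)_ω) ≤ λ·D for every ω ∈ Ω. -/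
open MeasureTheory

/-- `⨆_{x ∈ X} ‖D^j φ(x)‖`, the supremum over `X` of the norm of the `j`-th iterated
Fréchet derivative of `φ`. -/
noncomputable def supDerivOn {E : Type*} [NormedAddCommGroup E] [NormedSpace ℝ E]
    (X : Set E) (j : ℕ) (φ : E → ℝ) : ℝ :=
  ⨆ x ∈ X, ‖iteratedFDeriv ℝ j φ x‖

/-- The `C³`-dual seminorm distance between two finite Borel measures:
`N₃(σ,σ′) = sup { ∫ φ dσ − ∫ φ dσ′ : φ C³, ∑_{j=1}^{3} sup_{x∈X} ‖D^j φ(x)‖ ≤ 1 }`. -/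
noncomputable def N3 {E : Type*} [NormedAddCommGroup E] [NormedSpace ℝ E]
    [MeasurableSpace E] (X : Set E) (σ σ' : Measure E) : ℝ :=
  ⨆ φ : {φ : E → ℝ // ContDiff ℝ 3 φ ∧
      supDerivOn X 1 φ + supDerivOn X 2 φ + supDerivOn X 3 φ ≤ 1},
    (∫ x, φ.1 x ∂σ) - ∫ x, φ.1 x ∂σ'

/-- The sectional transfer operator (full-branch form):
`(Kν)_ω = ∑_{i∈I} p_i(ω) · (g_{θ_i(ω)})_* ν_{θ_i(ω)}`. -/
noncomputable def sectionalTransfer {Ω X I : Type*} [MeasurableSpace X]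
    (θ : I → Ω → Ω) (p : I → Ω → ℝ) (g : Ω → X → X)
    (ν : Ω → Measure X) (ω : Ω) : Measure X :=
  Measure.sum fun i => ENNReal.ofReal (p i ω) • ((ν (θ i ω)).map (g (θ i ω)))

/-! Write `S_j = sup_X ‖D^j φ‖` for a test function `φ` of `N3`. Since every `g_ω` maps `X`
into itself, the chain rule up to order three (Faà di Bruno) gives on `X`
`‖D(φ ∘ g)‖ ≤ S₁L₁`, `‖D²(φ ∘ g)‖ ≤ S₂L₁² + S₁L₂`, `‖D³(φ ∘ g)‖ ≤ S₃L₁³ + 3S₂L₁L₂ + S₁L₃`,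
so the `C³`-seminorm of `φ ∘ g` is at most `S₁(L₁+L₂+L₃) + S₂(L₁²+3L₁L₂) + S₃L₁³ ≤ λ`.
Thus `φ ∘ g / λ'` is a test function for every `λ' > λ`, whence
`∫ φ ∘ g dσ_ϑ - ∫ φ ∘ g dσ'_ϑ ≤ λ N₃(σ_ϑ, σ'_ϑ) ≤ λ D`. Integrating `φ` against `(Kσ)_ω` averages
these integrals over the branches with the weights `p_i(ω)`, which preserves the bound.
Convexity of `X` makes test functions `1`-Lipschitz on `X`, so the supremum defining `N₃` is
finite and not a junk value. -/

section FaaDiBruno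

variable {E F G : Type*} [NormedAddCommGroup E] [NormedSpace ℝ E]
  [NormedAddCommGroup F] [NormedSpace ℝ F] [NormedAddCommGroup G] [NormedSpace ℝ G]
  {φ : F → G} {g : E → F}

lemma norm_iteratedFDeriv_one_comp_le {x : E} (hφ : DifferentiableAt ℝ φ (g x))
    (hg : DifferentiableAt ℝ g x) :
    ‖iteratedFDeriv ℝ 1 (φ ∘ g) x‖ ≤ ‖iteratedFDeriv ℝ 1 φ (g x)‖ * ‖iteratedFDeriv ℝ 1 g x‖ := by
  simp only [norm_iteratedFDeriv_one, fderiv_comp x hφ hg]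
  exact ContinuousLinearMap.opNorm_comp_le _ _

/-- `D(φ ∘ g) = (Dφ ∘ g) ∘L Dg` is bilinear in `Dφ ∘ g` and `Dg`, so Leibniz's rule applies. -/
lemma norm_iteratedFDeriv_succ_comp_le {n : ℕ} (hφ : ContDiff ℝ (n + 1) φ)
    (hg : ContDiff ℝ (n + 1) g) (x : E) :
    ‖iteratedFDeriv ℝ (n + 1) (φ ∘ g) x‖ ≤
      ∑ i ∈ Finset.range (n + 1), (n.choose i : ℝ) * ‖iteratedFDeriv ℝ i (fderiv ℝ φ ∘ g) x‖ *
        ‖iteratedFDeriv ℝ (n - i + 1) g x‖ := by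
  have hφ1 : Differentiable ℝ φ := hφ.differentiable (by simp)
  have hg1 : Differentiable ℝ g := hg.differentiable (by simp)
  have hD : fderiv ℝ (φ ∘ g) = fun y =>
      ContinuousLinearMap.compL ℝ E F G (fderiv ℝ φ (g y)) (fderiv ℝ g y) :=
    funext fun y => fderiv_comp y (hφ1 (g y)) (hg1 y)
  rw [← norm_iteratedFDeriv_fderiv, hD]
  refine ((ContinuousLinearMap.compL ℝ E F G).norm_iteratedFDeriv_le_of_bilinear_of_le_one
    ((hφ.fderiv_right le_rfl).comp (hg.of_le (by simp))) (hg.fderiv_right le_rfl) x le_rfl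
    (ContinuousLinearMap.norm_compL_le ℝ E F G)).trans (le_of_eq ?_)
  simp only [Function.comp_def, norm_iteratedFDeriv_fderiv]

lemma norm_iteratedFDeriv_two_comp_le (hφ : ContDiff ℝ 2 φ) (hg : ContDiff ℝ 2 g) (x : E) :
    ‖iteratedFDeriv ℝ 2 (φ ∘ g) x‖ ≤
      ‖iteratedFDeriv ℝ 2 φ (g x)‖ * ‖iteratedFDeriv ℝ 1 g x‖ ^ 2 +
        ‖iteratedFDeriv ℝ 1 φ (g x)‖ * ‖iteratedFDeriv ℝ 2 g x‖ := by
  have hDφ : ‖iteratedFDeriv ℝ 1 (fderiv ℝ φ ∘ g) x‖ ≤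
      ‖iteratedFDeriv ℝ 2 φ (g x)‖ * ‖iteratedFDeriv ℝ 1 g x‖ := by
    rw [← norm_iteratedFDeriv_fderiv (n := 1) (f := φ)]
    exact norm_iteratedFDeriv_one_comp_le
      ((hφ.fderiv_right (m := 1) le_rfl).differentiable one_ne_zero _)
      (hg.differentiable (by simp) _)
  refine (norm_iteratedFDeriv_succ_comp_le (n := 1) hφ hg x).trans ?_
  simp only [Finset.sum_range_succ, Finset.sum_range_zero, Nat.choose_zero_right,
    Nat.choose_self, Nat.reduceSub, Nat.reduceAdd, Nat.cast_one, norm_iteratedFDeriv_zero,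
    Function.comp_apply, zero_add, one_mul, ← norm_iteratedFDeriv_one]
  linarith [mul_le_mul_of_nonneg_right hDφ (norm_nonneg (iteratedFDeriv ℝ 1 g x))]

lemma norm_iteratedFDeriv_three_comp_le (hφ : ContDiff ℝ 3 φ) (hg : ContDiff ℝ 3 g) (x : E) :
    ‖iteratedFDeriv ℝ 3 (φ ∘ g) x‖ ≤
      ‖iteratedFDeriv ℝ 3 φ (g x)‖ * ‖iteratedFDeriv ℝ 1 g x‖ ^ 3 +
        3 * ‖iteratedFDeriv ℝ 2 φ (g x)‖ * ‖iteratedFDeriv ℝ 1 g x‖ *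
          ‖iteratedFDeriv ℝ 2 g x‖ +
        ‖iteratedFDeriv ℝ 1 φ (g x)‖ * ‖iteratedFDeriv ℝ 3 g x‖ := by
  have hDφ₁ : ‖iteratedFDeriv ℝ 1 (fderiv ℝ φ ∘ g) x‖ ≤
      ‖iteratedFDeriv ℝ 2 φ (g x)‖ * ‖iteratedFDeriv ℝ 1 g x‖ := by
    rw [← norm_iteratedFDeriv_fderiv (n := 1) (f := φ)]
    exact norm_iteratedFDeriv_one_comp_le
      ((hφ.fderiv_right (m := 2) le_rfl).differentiable two_ne_zero _)
      (hg.differentiable (by simp) _)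
  have hDφ₂ := norm_iteratedFDeriv_two_comp_le (hφ.fderiv_right (m := 2) le_rfl)
    (hg.of_le (by norm_num)) x
  simp only [norm_iteratedFDeriv_fderiv, Nat.reduceAdd] at hDφ₂
  refine (norm_iteratedFDeriv_succ_comp_le (n := 2) hφ hg x).trans ?_
  simp only [Finset.sum_range_succ, Finset.sum_range_zero, Nat.choose_zero_right,
    Nat.choose_one_right, Nat.choose_self, Nat.reduceSub, Nat.reduceAdd, Nat.cast_one,
    Nat.cast_ofNat, norm_iteratedFDeriv_zero, Function.comp_apply, zero_add, one_mul,
    ← norm_iteratedFDeriv_one]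
  linarith [mul_le_mul_of_nonneg_right hDφ₁ (norm_nonneg (iteratedFDeriv ℝ 2 g x)),
    mul_le_mul_of_nonneg_right hDφ₂ (norm_nonneg (iteratedFDeriv ℝ 1 g x))]

end FaaDiBruno

section supDerivOn

variable {E : Type*} [NormedAddCommGroup E] [NormedSpace ℝ E] {X : Set E} {j : ℕ} {φ : E → ℝ}

lemma supDerivOn_nonneg : 0 ≤ supDerivOn X j φ :=
  Real.iSup_nonneg fun _ => Real.iSup_nonneg fun _ => norm_nonneg _

lemma supDerivOn_le {C : ℝ} (hC : 0 ≤ C) (h : ∀ x ∈ X, ‖iteratedFDeriv ℝ j φ x‖ ≤ C) :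
    supDerivOn X j φ ≤ C :=
  Real.iSup_le (fun x => Real.iSup_le (h x) hC) hC

lemma norm_iteratedFDeriv_le_supDerivOn (hX : IsCompact X)
    (hφ : Continuous (iteratedFDeriv ℝ j φ)) {x : E} (hx : x ∈ X) :
    ‖iteratedFDeriv ℝ j φ x‖ ≤ supDerivOn X j φ := by
  refine le_ciSup₂ (f := fun y (_ : y ∈ X) => ‖iteratedFDeriv ℝ j φ y‖) ?_ x hx
  refine ((hX.image hφ.norm).bddAbove).mono ?_
  simp only [Set.iUnion_subset_iff, Set.range_subset_iff]
  exact fun y hy => Set.mem_image_of_mem _ hy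

lemma supDerivOn_const_smul {c : ℝ} (hc : 0 ≤ c) (hφ : ContDiff ℝ j φ) :
    supDerivOn X j (c • φ) = c * supDerivOn X j φ := by
  simp only [supDerivOn, iteratedFDeriv_const_smul_apply hφ.contDiffAt, norm_smul,
    Real.norm_of_nonneg hc, Real.mul_iSup_of_nonneg hc]

end supDerivOn

section c3Seminorm

variable {E : Type*} [NormedAddCommGroup E] [NormedSpace ℝ E] {X : Set E} {φ : E → ℝ}

noncomputable def c3Seminorm (X : Set E) (φ : E → ℝ) : ℝ :=
  supDerivOn X 1 φ + supDerivOn X 2 φ + supDerivOn X 3 φ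

lemma c3Seminorm_nonneg : 0 ≤ c3Seminorm X φ :=
  add_nonneg (add_nonneg supDerivOn_nonneg supDerivOn_nonneg) supDerivOn_nonneg

lemma c3Seminorm_const_smul {c : ℝ} (hc : 0 ≤ c) (hφ : ContDiff ℝ 3 φ) :
    c3Seminorm X (c • φ) = c * c3Seminorm X φ := by
  simp only [c3Seminorm, supDerivOn_const_smul hc hφ,
    supDerivOn_const_smul hc (hφ.of_le (by norm_num : (1 : WithTop ℕ∞) ≤ 3)),
    supDerivOn_const_smul hc (hφ.of_le (by norm_num : (2 : WithTop ℕ∞) ≤ 3))]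
  ring

lemma c3Seminorm_comp_le_of_norm_iteratedFDeriv_le {g : E → E} {L₁ L₂ L₃ : ℝ}
    (hX : IsCompact X) (hXne : X.Nonempty) (hφ : ContDiff ℝ 3 φ) (hg : ContDiff ℝ 3 g)
    (hgX : Set.MapsTo g X X) (hL₁ : ∀ x ∈ X, ‖iteratedFDeriv ℝ 1 g x‖ ≤ L₁)
    (hL₂ : ∀ x ∈ X, ‖iteratedFDeriv ℝ 2 g x‖ ≤ L₂) (hL₃ : ∀ x ∈ X, ‖iteratedFDeriv ℝ 3 g x‖ ≤ L₃) :
    c3Seminorm X (φ ∘ g) ≤ supDerivOn X 1 φ * (L₁ + L₂ + L₃) +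
      supDerivOn X 2 φ * (L₁ ^ 2 + 3 * L₁ * L₂) + supDerivOn X 3 φ * L₁ ^ 3 := by
  obtain ⟨x₀, hx₀⟩ := hXne
  have hL₁0 : 0 ≤ L₁ := (norm_nonneg _).trans (hL₁ x₀ hx₀)
  have hL₂0 : 0 ≤ L₂ := (norm_nonneg _).trans (hL₂ x₀ hx₀)
  have hL₃0 : 0 ≤ L₃ := (norm_nonneg _).trans (hL₃ x₀ hx₀)
  have hS : ∀ j : ℕ, j ≤ 3 → ∀ x ∈ X, ‖iteratedFDeriv ℝ j φ (g x)‖ ≤ supDerivOn X j φ :=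
    fun j hj x hx => norm_iteratedFDeriv_le_supDerivOn hX
      (hφ.continuous_iteratedFDeriv (by exact_mod_cast hj)) (hgX hx)
  set S₁ := supDerivOn X 1 φ
  set S₂ := supDerivOn X 2 φ
  set S₃ := supDerivOn X 3 φ
  have hS₁ : 0 ≤ S₁ := supDerivOn_nonneg
  have hS₂ : 0 ≤ S₂ := supDerivOn_nonneg
  have hS₃ : 0 ≤ S₃ := supDerivOn_nonneg
  have h₁ : supDerivOn X 1 (φ ∘ g) ≤ S₁ * L₁ := by
    refine supDerivOn_le (by positivity) fun x hx => ?_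
    refine (norm_iteratedFDeriv_one_comp_le (hφ.differentiable (by norm_num) _)
      (hg.differentiable (by norm_num) _)).trans ?_
    gcongr
    exacts [hS 1 (by norm_num) x hx, hL₁ x hx]
  have h₂ : supDerivOn X 2 (φ ∘ g) ≤ S₂ * L₁ ^ 2 + S₁ * L₂ := by
    refine supDerivOn_le (by positivity) fun x hx => ?_
    refine (norm_iteratedFDeriv_two_comp_le (hφ.of_le (by norm_num)) (hg.of_le (by norm_num))
      x).trans ?_
    gcongr
    exacts [hS 2 (by norm_num) x hx, hL₁ x hx, hS 1 (by norm_num) x hx, hL₂ x hx]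
  have h₃ : supDerivOn X 3 (φ ∘ g) ≤ S₃ * L₁ ^ 3 + 3 * S₂ * L₁ * L₂ + S₁ * L₃ := by
    refine supDerivOn_le (by positivity) fun x hx => ?_
    refine (norm_iteratedFDeriv_three_comp_le hφ hg x).trans ?_
    gcongr
    exacts [hS 3 (by norm_num) x hx, hL₁ x hx, hS 2 (by norm_num) x hx, hL₁ x hx, hL₂ x hx,
      hS 1 (by norm_num) x hx, hL₃ x hx]
  unfold c3Seminorm
  linarith

lemma c3Seminorm_comp_le {g : E → E} {L₁ L₂ L₃ lam : ℝ} (hX : IsCompact X) (hXne : X.Nonempty)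
    (hφ : ContDiff ℝ 3 φ) (hg : ContDiff ℝ 3 g) (hgX : Set.MapsTo g X X)
    (hL₁ : ∀ x ∈ X, ‖iteratedFDeriv ℝ 1 g x‖ ≤ L₁)
    (hL₂ : ∀ x ∈ X, ‖iteratedFDeriv ℝ 2 g x‖ ≤ L₂)
    (hL₃ : ∀ x ∈ X, ‖iteratedFDeriv ℝ 3 g x‖ ≤ L₃)
    (hmax : max (L₁ + L₂ + L₃) (max (L₁ ^ 2 + 3 * L₁ * L₂) (L₁ ^ 3)) ≤ lam) :
    c3Seminorm X (φ ∘ g) ≤ lam * c3Seminorm X φ := by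
  have hmax₁ : L₁ + L₂ + L₃ ≤ lam := (le_max_left _ _).trans hmax
  have hmax₂ : L₁ ^ 2 + 3 * L₁ * L₂ ≤ lam :=
    (le_max_left _ _).trans ((le_max_right _ _).trans hmax)
  have hmax₃ : L₁ ^ 3 ≤ lam := (le_max_right _ _).trans ((le_max_right _ _).trans hmax)
  have hS₁ : 0 ≤ supDerivOn X 1 φ := supDerivOn_nonneg
  have hS₂ : 0 ≤ supDerivOn X 2 φ := supDerivOn_nonneg
  have hS₃ : 0 ≤ supDerivOn X 3 φ := supDerivOn_nonneg
  have := c3Seminorm_comp_le_of_norm_iteratedFDeriv_le hX hXne hφ hg hgX hL₁ hL₂ hL₃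
  unfold c3Seminorm at this ⊢
  linarith [mul_le_mul_of_nonneg_left hmax₁ hS₁, mul_le_mul_of_nonneg_left hmax₂ hS₂,
    mul_le_mul_of_nonneg_left hmax₃ hS₃]

end c3Seminorm

section Integrals

variable {α : Type*} [MeasurableSpace α] {X : Set α} {μ : Measure α}

lemma norm_integral_le_of_measure_compl_eq_zero [IsProbabilityMeasure μ] {f : α → ℝ} {C : ℝ}
    (hμ : μ Xᶜ = 0) (hf : ∀ x ∈ X, ‖f x‖ ≤ C) : ‖∫ x, f x ∂μ‖ ≤ C := by
  simpa using norm_integral_le_of_norm_le_const (Filter.Eventually.mono (mem_ae_iff.2 hμ) hf)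

lemma integrable_of_measure_compl_eq_zero [TopologicalSpace α] [OpensMeasurableSpace α]
    [IsFiniteMeasure μ] (hX : IsCompact X) {f : α → ℝ} (hf : Continuous f) (hμ : μ Xᶜ = 0) :
    Integrable f μ := by
  obtain ⟨C, hC⟩ := hX.exists_bound_of_continuousOn hf.continuousOn
  exact Integrable.of_bound hf.aestronglyMeasurable C (Filter.Eventually.mono (mem_ae_iff.2 hμ) hC)

end Integrals

section N3

variable {E : Type*} [NormedAddCommGroup E] [NormedSpace ℝ E] [MeasurableSpace E] [BorelSpace E]
  {X : Set E} {σ σ' : Measure E} [IsProbabilityMeasure σ] [IsProbabilityMeasure σ']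

lemma integral_sub_integral_le_two_mul_diam (hX : IsCompact X) (hXconv : Convex ℝ X)
    (hXne : X.Nonempty) (hσ : σ Xᶜ = 0) (hσ' : σ' Xᶜ = 0) {φ : E → ℝ} (hφ : Differentiable ℝ φ)
    (hφ' : ∀ x ∈ X, ‖fderiv ℝ φ x‖ ≤ 1) :
    ∫ x, φ x ∂σ - ∫ x, φ x ∂σ' ≤ 2 * Metric.diam X := by
  obtain ⟨x₀, hx₀⟩ := hXne
  have hosc : ∀ x ∈ X, ‖φ x - φ x₀‖ ≤ Metric.diam X := fun x hx =>
    calc ‖φ x - φ x₀‖ ≤ 1 * ‖x - x₀‖ :=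
          hXconv.norm_image_sub_le_of_norm_fderiv_le (fun y _ => hφ y) hφ' hx₀ hx
      _ ≤ Metric.diam X := by
          rw [one_mul, ← dist_eq_norm]
          exact Metric.dist_le_diam_of_mem hX.isBounded hx hx₀
  have hφc := hφ.continuous
  have hmean : ∀ μ : Measure E, IsProbabilityMeasure μ → μ Xᶜ = 0 →
      |∫ x, φ x ∂μ - φ x₀| ≤ Metric.diam X := fun μ _ hμ => by
    have hshift : ∫ x, (φ x - φ x₀) ∂μ = ∫ x, φ x ∂μ - φ x₀ := by
      rw [integral_sub (integrable_of_measure_compl_eq_zero hX hφc hμ) (integrable_const _),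
        integral_const, probReal_univ, one_smul]
    rw [← Real.norm_eq_abs, ← hshift]
    exact norm_integral_le_of_measure_compl_eq_zero hμ hosc
  have h := abs_le.1 (hmean σ ‹_› hσ)
  have h' := abs_le.1 (hmean σ' ‹_› hσ')
  linarith [h.2, h'.1]

lemma bddAbove_N3 (hX : IsCompact X) (hXconv : Convex ℝ X) (hXne : X.Nonempty)
    (hσ : σ Xᶜ = 0) (hσ' : σ' Xᶜ = 0) :
    BddAbove (Set.range fun φ : {φ : E → ℝ // ContDiff ℝ 3 φ ∧ c3Seminorm X φ ≤ 1} =>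
      ∫ x, φ.1 x ∂σ - ∫ x, φ.1 x ∂σ') := by
  refine ⟨2 * Metric.diam X, ?_⟩
  rintro _ ⟨⟨φ, hφ, hφ1⟩, rfl⟩
  refine integral_sub_integral_le_two_mul_diam hX hXconv hXne hσ hσ'
    (hφ.differentiable (by norm_num)) fun x hx => ?_
  change ‖fderiv ℝ φ x‖ ≤ 1
  rw [← norm_iteratedFDeriv_one]
  have h₂ : 0 ≤ supDerivOn X 2 φ := supDerivOn_nonneg
  have h₃ : 0 ≤ supDerivOn X 3 φ := supDerivOn_nonneg
  have h₁ := norm_iteratedFDeriv_le_supDerivOn (j := 1) hX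
    (hφ.continuous_iteratedFDeriv (by norm_num)) hx
  unfold c3Seminorm at hφ1
  linarith

lemma integral_sub_integral_le_N3 (hX : IsCompact X) (hXconv : Convex ℝ X) (hXne : X.Nonempty)
    (hσ : σ Xᶜ = 0) (hσ' : σ' Xᶜ = 0) {ψ : E → ℝ} (hψ : ContDiff ℝ 3 ψ)
    (hψ1 : c3Seminorm X ψ ≤ 1) :
    ∫ x, ψ x ∂σ - ∫ x, ψ x ∂σ' ≤ N3 X σ σ' :=
  le_ciSup (bddAbove_N3 hX hXconv hXne hσ hσ') ⟨ψ, hψ, hψ1⟩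

lemma integral_sub_integral_le_mul_of_N3_le (hX : IsCompact X) (hXconv : Convex ℝ X)
    (hXne : X.Nonempty) (hσ : σ Xᶜ = 0) (hσ' : σ' Xᶜ = 0) {ψ : E → ℝ} (hψ : ContDiff ℝ 3 ψ)
    {c D : ℝ} (hψc : c3Seminorm X ψ ≤ c) (hN : N3 X σ σ' ≤ D) :
    ∫ x, ψ x ∂σ - ∫ x, ψ x ∂σ' ≤ c * D := by
  have hscaled : ∀ c' > c, ∫ x, ψ x ∂σ - ∫ x, ψ x ∂σ' ≤ c' * D := fun c' hc' => by
    have hc'0 : 0 < c' := (c3Seminorm_nonneg.trans hψc).trans_lt hc'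
    have hadm : c3Seminorm X (c'⁻¹ • ψ) ≤ 1 := by
      rw [c3Seminorm_const_smul (inv_nonneg.2 hc'0.le) hψ, inv_mul_le_one₀ hc'0]
      exact hψc.trans hc'.le
    have h := (integral_sub_integral_le_N3 hX hXconv hXne hσ hσ' (hψ.const_smul c'⁻¹)
      hadm).trans hN
    simp only [smul_eq_mul, integral_const_mul, ← mul_sub] at h
    rwa [inv_mul_le_iff₀ hc'0] at h
  -- `c⁻¹ • ψ` is a test function only when `c > 0`, so approach `c` from above.
  exact ge_of_tendsto (((continuous_mul_const D).tendsto c).mono_left nhdsWithin_le_nhds)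
    (eventually_nhdsWithin_of_forall (s := Set.Ioi c) hscaled)

end N3

lemma summable_of_tsum_ne_zero {ι α : Type*} [AddCommMonoid α] [TopologicalSpace α] {f : ι → α}
    (h : ∑' i, f i ≠ 0) : Summable f :=
  not_not.1 fun hf => h (tsum_eq_zero_of_not_summable hf)

lemma tsum_mul_sub_tsum_mul_le {ι : Type*} {p a b : ι → ℝ} {C M : ℝ} (hp0 : ∀ i, 0 ≤ p i)
    (hp1 : ∑' i, p i = 1) (ha : ∀ i, ‖a i‖ ≤ C) (hb : ∀ i, ‖b i‖ ≤ C)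
    (hab : ∀ i, a i - b i ≤ M) :
    ∑' i, p i * a i - ∑' i, p i * b i ≤ M := by
  have hp : Summable p := summable_of_tsum_ne_zero (hp1 ▸ one_ne_zero)
  have hsummable : ∀ f : ι → ℝ, (∀ i, ‖f i‖ ≤ C) → Summable fun i => p i * f i :=
    fun f hf => (hp.mul_right C).of_norm_bounded fun i => by
      rw [norm_mul, Real.norm_of_nonneg (hp0 i)]
      exact mul_le_mul_of_nonneg_left (hf i) (hp0 i)
  calc ∑' i, p i * a i - ∑' i, p i * b i = ∑' i, p i * (a i - b i) := by
        rw [← (hsummable a ha).tsum_sub (hsummable b hb)]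
        simp only [mul_sub]
    _ ≤ ∑' i, p i * M :=
        ((hsummable a ha).sub (hsummable b hb) |>.congr fun i =>
          (mul_sub _ _ _).symm).tsum_le_tsum (fun i => mul_le_mul_of_nonneg_left (hab i) (hp0 i))
          (hp.mul_right M)
    _ = M := by rw [tsum_mul_right, hp1, one_mul]

section sectionalTransfer

variable {Ω X I : Type*} [MeasurableSpace X] {θ : I → Ω → Ω} {p : I → Ω → ℝ} {g : Ω → X → X}
  {ν : Ω → Measure X} {ω : Ω}

lemma sectionalTransfer_apply_compl_eq_zero {s : Set X} (hs : MeasurableSet s)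
    (hg : ∀ ϑ, Measurable (g ϑ)) (hgs : ∀ ϑ, Set.MapsTo (g ϑ) s s) (hν : ∀ ϑ, ν ϑ sᶜ = 0) :
    sectionalTransfer θ p g ν ω sᶜ = 0 := by
  simp only [sectionalTransfer, Measure.sum_apply _ hs.compl, Measure.smul_apply,
    Measure.map_apply (hg _) hs.compl, smul_eq_mul, ENNReal.tsum_eq_zero]
  intro i
  have hpre : g (θ i ω) ⁻¹' sᶜ ⊆ sᶜ := fun x hx hxs => hx (hgs _ hxs)
  rw [measure_mono_null hpre (hν _), mul_zero]

lemma isProbabilityMeasure_sectionalTransfer (hp0 : ∀ i, 0 ≤ p i ω) (hp1 : ∑' i, p i ω = 1)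
    (hg : ∀ ϑ, Measurable (g ϑ)) (hν : ∀ ϑ, IsProbabilityMeasure (ν ϑ)) :
    IsProbabilityMeasure (sectionalTransfer θ p g ν ω) := by
  have hp : Summable (p · ω) := summable_of_tsum_ne_zero (hp1 ▸ one_ne_zero)
  constructor
  simp only [sectionalTransfer, Measure.sum_apply _ MeasurableSet.univ, Measure.smul_apply,
    Measure.map_apply (hg _) MeasurableSet.univ, Set.preimage_univ, measure_univ, smul_eq_mul,
    mul_one]
  rw [← ENNReal.ofReal_tsum_of_nonneg hp0 hp, hp1, ENNReal.ofReal_one]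

lemma integral_sectionalTransfer (hp0 : ∀ i, 0 ≤ p i ω) (hg : ∀ ϑ, Measurable (g ϑ))
    {f : X → ℝ} (hf : Measurable f) (hfi : Integrable f (sectionalTransfer θ p g ν ω)) :
    ∫ x, f x ∂sectionalTransfer θ p g ν ω = ∑' i, p i ω * ∫ x, f (g (θ i ω) x) ∂ν (θ i ω) := by
  rw [sectionalTransfer, integral_sum_measure hfi]
  refine tsum_congr fun i => ?_
  rw [integral_smul_measure, ENNReal.toReal_ofReal (hp0 i), smul_eq_mul,
    integral_map (hg _).aemeasurable hf.aestronglyMeasurable]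

lemma integral_sectionalTransfer_of_continuous [TopologicalSpace X] [OpensMeasurableSpace X]
    {s : Set X} (hs : IsCompact s) (hsm : MeasurableSet s) (hp0 : ∀ i, 0 ≤ p i ω)
    (hp1 : ∑' i, p i ω = 1) (hg : ∀ ϑ, Measurable (g ϑ)) (hgs : ∀ ϑ, Set.MapsTo (g ϑ) s s)
    (hν : ∀ ϑ, IsProbabilityMeasure (ν ϑ)) (hνs : ∀ ϑ, ν ϑ sᶜ = 0) {f : X → ℝ}
    (hf : Continuous f) :
    ∫ x, f x ∂sectionalTransfer θ p g ν ω = ∑' i, p i ω * ∫ x, f (g (θ i ω) x) ∂ν (θ i ω) :=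
  have := isProbabilityMeasure_sectionalTransfer (θ := θ) hp0 hp1 hg hν
  integral_sectionalTransfer hp0 hg hf.measurable (integrable_of_measure_compl_eq_zero hs hf
    (sectionalTransfer_apply_compl_eq_zero hsm hg hgs hνs))

end sectionalTransfer

theorem sectionalTransfer_N3_contraction_general
    {d : ℕ} (X : Set (EuclideanSpace ℝ (Fin d)))
    (hXcpt : IsCompact X) (hXconv : Convex ℝ X) (hXne : X.Nonempty)
    {Ω I : Type*}
    (θ : I → Ω → Ω) (p : I → Ω → ℝ)
    (hp0 : ∀ i ω, 0 ≤ p i ω) (hp1 : ∀ ω, ∑' i, p i ω = 1)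
    (g : Ω → EuclideanSpace ℝ (Fin d) → EuclideanSpace ℝ (Fin d))
    (hg3 : ∀ ω, ContDiff ℝ 3 (g ω)) (hgX : ∀ ω, Set.MapsTo (g ω) X X)
    (L₁ L₂ L₃ lam : ℝ) (hlam0 : 0 ≤ lam)
    (hL₁ : ∀ ω, ∀ x ∈ X, ‖iteratedFDeriv ℝ 1 (g ω) x‖ ≤ L₁)
    (hL₂ : ∀ ω, ∀ x ∈ X, ‖iteratedFDeriv ℝ 2 (g ω) x‖ ≤ L₂)
    (hL₃ : ∀ ω, ∀ x ∈ X, ‖iteratedFDeriv ℝ 3 (g ω) x‖ ≤ L₃)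
    (hmax : max (L₁ + L₂ + L₃) (max (L₁ ^ 2 + 3 * L₁ * L₂) (L₁ ^ 3)) ≤ lam)
    (σ σ' : Ω → Measure (EuclideanSpace ℝ (Fin d)))
    (hσp : ∀ ω, IsProbabilityMeasure (σ ω)) (hσ'p : ∀ ω, IsProbabilityMeasure (σ' ω))
    (hσX : ∀ ω, σ ω Xᶜ = 0) (hσ'X : ∀ ω, σ' ω Xᶜ = 0)
    (D : ℝ) (hD : 0 ≤ D)
    (hND : ∀ ϑ : Ω, N3 X (σ ϑ) (σ' ϑ) ≤ D) :
    ∀ ω : Ω,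
      N3 X (sectionalTransfer θ p g σ ω) (sectionalTransfer θ p g σ' ω) ≤ lam * D := by
  intro ω
  have hXm : MeasurableSet X := hXcpt.isClosed.measurableSet
  have hgm : ∀ ϑ, Measurable (g ϑ) := fun ϑ => (hg3 ϑ).continuous.measurable
  refine Real.iSup_le (fun ⟨φ, hφ, hφ1⟩ => ?_) (mul_nonneg hlam0 hD)
  obtain ⟨C, hC⟩ := hXcpt.exists_bound_of_continuousOn hφ.continuous.continuousOn
  have hbound : ∀ ϑ (τ : Measure (EuclideanSpace ℝ (Fin d))), IsProbabilityMeasure τ →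
      τ Xᶜ = 0 → ‖∫ x, φ (g ϑ x) ∂τ‖ ≤ C :=
    fun ϑ τ _ hτ => norm_integral_le_of_measure_compl_eq_zero hτ fun x hx => hC _ (hgX ϑ hx)
  rw [integral_sectionalTransfer_of_continuous hXcpt hXm (hp0 · ω) (hp1 ω) hgm hgX hσp hσX
      hφ.continuous,
    integral_sectionalTransfer_of_continuous hXcpt hXm (hp0 · ω) (hp1 ω) hgm hgX hσ'p hσ'X
      hφ.continuous]
  refine tsum_mul_sub_tsum_mul_le (hp0 · ω) (hp1 ω) (fun i => hbound _ _ (hσp _) (hσX _))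
    (fun i => hbound _ _ (hσ'p _) (hσ'X _)) fun i => ?_
  have := hσp (θ i ω)
  have := hσ'p (θ i ω)
  have hcomp := c3Seminorm_comp_le hXcpt hXne hφ (hg3 (θ i ω)) (hgX _) (hL₁ _) (hL₂ _)
    (hL₃ _) hmax
  exact integral_sub_integral_le_mul_of_N3_le hXcpt hXconv hXne (hσX _) (hσ'X _)
    (hφ.comp (hg3 _)) (hcomp.trans (mul_le_of_le_one_right hlam0 hφ1)) (hND _)

/-- Contraction of the sectional transfer operator on the `C³`-dual distance `N₃`: if
the `C³` fibre maps preserve the compact convex set `X ⊆ ℝ^d` and their derivative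
bounds `L₁, L₂, L₃` on `X` satisfy `max{L₁+L₂+L₃, L₁²+3L₁L₂, L₁³} ≤ λ < 1`, then
`N₃(σ_θ, σ′_θ) ≤ D` for all `θ` implies `N₃((Kσ)_ω, (Kσ′)_ω) ≤ λ·D` for all `ω`. -/
theorem sectionalTransfer_N3_contraction
    {d : ℕ} (X : Set (EuclideanSpace ℝ (Fin d)))
    (hXcpt : IsCompact X) (hXconv : Convex ℝ X) (hXne : X.Nonempty)
    {Ω I : Type*} [Countable I]
    (θ : I → Ω → Ω) (p : I → Ω → ℝ)
    (hp0 : ∀ i ω, 0 ≤ p i ω) (hp1 : ∀ ω, ∑' i, p i ω = 1)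
    (g : Ω → EuclideanSpace ℝ (Fin d) → EuclideanSpace ℝ (Fin d))
    (hg3 : ∀ ω, ContDiff ℝ 3 (g ω)) (hgX : ∀ ω, Set.MapsTo (g ω) X X)
    (L₁ L₂ L₃ lam : ℝ) (hlam0 : 0 ≤ lam) (hlam1 : lam < 1)
    (hL₁ : ∀ ω, ∀ x ∈ X, ‖iteratedFDeriv ℝ 1 (g ω) x‖ ≤ L₁)
    (hL₂ : ∀ ω, ∀ x ∈ X, ‖iteratedFDeriv ℝ 2 (g ω) x‖ ≤ L₂)
    (hL₃ : ∀ ω, ∀ x ∈ X, ‖iteratedFDeriv ℝ 3 (g ω) x‖ ≤ L₃)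
    (hmax : max (L₁ + L₂ + L₃) (max (L₁ ^ 2 + 3 * L₁ * L₂) (L₁ ^ 3)) ≤ lam)
    (σ σ' : Ω → Measure (EuclideanSpace ℝ (Fin d)))
    (hσp : ∀ ω, IsProbabilityMeasure (σ ω)) (hσ'p : ∀ ω, IsProbabilityMeasure (σ' ω))
    (hσX : ∀ ω, σ ω Xᶜ = 0) (hσ'X : ∀ ω, σ' ω Xᶜ = 0)
    (D : ℝ) (hD : 0 ≤ D)
    (hND : ∀ ϑ : Ω, N3 X (σ ϑ) (σ' ϑ) ≤ D) :
    ∀ ω : Ω,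
      N3 X (sectionalTransfer θ p g σ ω) (sectionalTransfer θ p g σ' ω) ≤ lam * D :=
  sectionalTransfer_N3_contraction_general X hXcpt hXconv hXne θ p hp0 hp1 g hg3 hgX L₁ L₂ L₃ lam
    hlam0 hL₁ hL₂ hL₃ hmax σ σ' hσp hσ'p hσX hσ'X D hD hND
end

section
/- For all L₁, L₂, M₁, M₂, M₃ ≥ 0 there exists C ≥ 0 with the following property. Let E and F be real normed vector spaces, let h₁, h₂ : E → F be twice continuously differentiable with sup_{x∈E} ‖Dh_i(x)‖ ≤ L₁ and sup_{x∈E} ‖D²h_i(x)‖ ≤ L₂ for i = 1,2, and let φ : F → ℝ be three times continuously differentiable with sup_{y∈F} ‖D^s φ(y)‖ ≤ M_s for s = 1,2,3. Then for all reals d₀, d₁, d₂ with sup_{y∈E} ‖h₁(y) − h₂(y)‖ ≤ d₀, sup_{y∈E} ‖Dh₁(y) − Dh₂(y)‖ ≤ d₁ and sup_{y∈E} ‖D²h₁(y) − D²h₂(y)‖ ≤ d₂, and for every x ∈ E: |φ(h₁(x)) − φ(h₂(x))| + ‖D(φ∘h₁)(x) − D(φ∘h₂)(x)‖ + ‖D²(φ∘h₁)(x)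 − D²(φ∘h₂)(x)‖ ≤ C·(d₀ + d₁ + d₂). -/
/-!
The first two derivatives of `φ ∘ h` are `Dφ(h) ∘ Dh` and `Dφ(h) ∘ D²h + D²φ(h) (Dh ·) (Dh ·)`.
Replacing `h₁` by `h₂` one factor at a time, the difference of these expressions for `h₁` and
`h₂` splits into products with exactly one factor of the form `Dᵏh₁ - Dᵏh₂` or
`Dˢφ(h₁) - Dˢφ(h₂)`. The latter is at most `M_{s+1} ‖h₁ - h₂‖` by the mean value inequality,
and every other factor is bounded by one of the `L`'s and `M`'s.
-/

open ContinuousLinearMap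

section IteratedFDeriv

variable {𝕜 E F : Type*} [NontriviallyNormedField 𝕜]
  [NormedAddCommGroup E] [NormedSpace 𝕜 E] [NormedAddCommGroup F] [NormedSpace 𝕜 F]

theorem norm_iteratedFDeriv_zero_sub (f g : E → F) (x y : E) :
    ‖iteratedFDeriv 𝕜 0 f x - iteratedFDeriv 𝕜 0 g y‖ = ‖f x - g y‖ := by
  simp only [iteratedFDeriv_zero_eq_comp, Function.comp_apply, ← map_sub,
    LinearIsometryEquiv.norm_map]

theorem norm_iteratedFDeriv_succ_sub (n : ℕ) (f g : E → F) (x y : E) :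
    ‖iteratedFDeriv 𝕜 (n + 1) f x - iteratedFDeriv 𝕜 (n + 1) g y‖ =
      ‖iteratedFDeriv 𝕜 n (fderiv 𝕜 f) x - iteratedFDeriv 𝕜 n (fderiv 𝕜 g) y‖ := by
  simp only [iteratedFDeriv_succ_eq_comp_right, Function.comp_apply,
    ← LinearIsometryEquiv.map_sub, LinearIsometryEquiv.norm_map]

theorem norm_iteratedFDeriv_one_sub (f g : E → F) (x y : E) :
    ‖iteratedFDeriv 𝕜 1 f x - iteratedFDeriv 𝕜 1 g y‖ = ‖fderiv 𝕜 f x - fderiv 𝕜 g y‖ := by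
  rw [norm_iteratedFDeriv_succ_sub, norm_iteratedFDeriv_zero_sub]

theorem norm_iteratedFDeriv_two_sub (f g : E → F) (x y : E) :
    ‖iteratedFDeriv 𝕜 2 f x - iteratedFDeriv 𝕜 2 g y‖ =
      ‖fderiv 𝕜 (fderiv 𝕜 f) x - fderiv 𝕜 (fderiv 𝕜 g) y‖ := by
  rw [norm_iteratedFDeriv_succ_sub, norm_iteratedFDeriv_one_sub]

theorem norm_iteratedFDeriv_two (f : E → F) (x : E) :
    ‖iteratedFDeriv 𝕜 2 f x‖ = ‖fderiv 𝕜 (fderiv 𝕜 f) x‖ := by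
  rw [← norm_iteratedFDeriv_fderiv, norm_iteratedFDeriv_one]

end IteratedFDeriv

section SecondOrderChain

variable {𝕜 E F G : Type*} [NontriviallyNormedField 𝕜]
  [NormedAddCommGroup E] [NormedSpace 𝕜 E] [NormedAddCommGroup F] [NormedSpace 𝕜 F]
  [NormedAddCommGroup G] [NormedSpace 𝕜 G]

theorem ContinuousLinearMap.norm_comp_sub_comp_le (A₁ A₂ : F →L[𝕜] G) (B₁ B₂ : E →L[𝕜] F) :
    ‖A₁.comp B₁ - A₂.comp B₂‖ ≤ ‖A₁‖ * ‖B₁ - B₂‖ + ‖A₁ - A₂‖ * ‖B₂‖ := by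
  have h : A₁.comp B₁ - A₂.comp B₂ = A₁.comp (B₁ - B₂) + (A₁ - A₂).comp B₂ := by
    rw [comp_sub, sub_comp, sub_add_sub_cancel]
  rw [h]
  exact (norm_add_le _ _).trans (add_le_add (opNorm_comp_le _ _) (opNorm_comp_le _ _))

theorem ContinuousLinearMap.norm_comp_sub_comp_le_of_le {A₁ A₂ : F →L[𝕜] G} {B₁ B₂ : E →L[𝕜] F}
    {a δa b δb : ℝ} (hA₁ : ‖A₁‖ ≤ a) (hA : ‖A₁ - A₂‖ ≤ δa) (hB₂ : ‖B₂‖ ≤ b)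
    (hB : ‖B₁ - B₂‖ ≤ δb) :
    ‖A₁.comp B₁ - A₂.comp B₂‖ ≤ a * δb + δa * b :=
  (norm_comp_sub_comp_le A₁ A₂ B₁ B₂).trans <| add_le_add
    (mul_le_mul hA₁ hB (norm_nonneg _) ((norm_nonneg _).trans hA₁))
    (mul_le_mul hA hB₂ (norm_nonneg _) ((norm_nonneg _).trans hA))

theorem ContinuousLinearMap.norm_compL_apply_le (A : F →L[𝕜] G) : ‖compL 𝕜 E F G A‖ ≤ ‖A‖ :=
  opNorm_le_bound _ (norm_nonneg A) fun Q => opNorm_comp_le A Q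

theorem ContinuousLinearMap.norm_flip_compL_apply_le (B : E →L[𝕜] F) :
    ‖(compL 𝕜 E F G).flip B‖ ≤ ‖B‖ :=
  opNorm_le_bound _ (norm_nonneg B) fun A => (opNorm_comp_le A B).trans_eq (mul_comm _ _)

/-- `v ↦ A ∘ Q v + P (B v) ∘ B`; with `A = Dφ`, `P = D²φ`, `B = Dh`, `Q = D²h` this is
`D²(φ ∘ h)`. -/
noncomputable def secondOrderChain (A : F →L[𝕜] G) (P : F →L[𝕜] F →L[𝕜] G) (B : E →L[𝕜] F)
    (Q : E →L[𝕜] E →L[𝕜] F) : E →L[𝕜] E →L[𝕜] G :=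
  (compL 𝕜 E F G A).comp Q + ((compL 𝕜 E F G).flip B).comp (P.comp B)

theorem fderiv_fderiv_comp {φ : F → G} {h : E → F} {x : E} (hφ : Differentiable 𝕜 φ)
    (hh : Differentiable 𝕜 h) (hφ' : DifferentiableAt 𝕜 (fderiv 𝕜 φ) (h x))
    (hh' : DifferentiableAt 𝕜 (fderiv 𝕜 h) x) :
    fderiv 𝕜 (fderiv 𝕜 (φ ∘ h)) x = secondOrderChain (fderiv 𝕜 φ (h x))
      (fderiv 𝕜 (fderiv 𝕜 φ) (h x)) (fderiv 𝕜 h x) (fderiv 𝕜 (fderiv 𝕜 h) x) := by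
  have hD : fderiv 𝕜 (φ ∘ h) = fun y => (fderiv 𝕜 φ (h y)).comp (fderiv 𝕜 h y) :=
    funext fun y => fderiv_comp y (hφ _) (hh y)
  rw [hD, fderiv_clm_comp (c := fun y => fderiv 𝕜 φ (h y)) (hφ'.comp x (hh x)) hh',
    fderiv_fun_comp x hφ' (hh x)]
  rfl

theorem norm_secondOrderChain_sub_le {A₁ A₂ : F →L[𝕜] G} {P₁ P₂ : F →L[𝕜] F →L[𝕜] G}
    {B₁ B₂ : E →L[𝕜] F} {Q₁ Q₂ : E →L[𝕜] E →L[𝕜] F} {a δa p δp b δb q δq : ℝ}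
    (hA₁ : ‖A₁‖ ≤ a) (hA : ‖A₁ - A₂‖ ≤ δa) (hP₁ : ‖P₁‖ ≤ p) (hP₂ : ‖P₂‖ ≤ p)
    (hP : ‖P₁ - P₂‖ ≤ δp) (hB₁ : ‖B₁‖ ≤ b) (hB₂ : ‖B₂‖ ≤ b) (hB : ‖B₁ - B₂‖ ≤ δb)
    (hQ₂ : ‖Q₂‖ ≤ q) (hQ : ‖Q₁ - Q₂‖ ≤ δq) :
    ‖secondOrderChain A₁ P₁ B₁ Q₁ - secondOrderChain A₂ P₂ B₂ Q₂‖ ≤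
      a * δq + δa * q + (b * (p * δb + δp * b) + δb * (p * b)) := by
  have hcompL : ‖compL 𝕜 E F G A₁ - compL 𝕜 E F G A₂‖ ≤ δa := by
    rw [← map_sub]; exact (norm_compL_apply_le _).trans hA
  have hflip : ‖(compL 𝕜 E F G).flip B₁ - (compL 𝕜 E F G).flip B₂‖ ≤ δb := by
    rw [← map_sub]; exact (norm_flip_compL_apply_le _).trans hB
  have hPB₂ : ‖P₂.comp B₂‖ ≤ p * b :=
    (opNorm_comp_le _ _).trans (mul_le_mul hP₂ hB₂ (norm_nonneg _) ((norm_nonneg P₂).trans hP₂))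
  rw [secondOrderChain, secondOrderChain, add_sub_add_comm]
  refine (norm_add_le (E := E →L[𝕜] E →L[𝕜] G) _ _).trans (add_le_add ?_ ?_)
  · exact norm_comp_sub_comp_le_of_le (A₁ := compL 𝕜 E F G A₁)
      ((norm_compL_apply_le A₁).trans hA₁) hcompL hQ₂ hQ
  · exact norm_comp_sub_comp_le_of_le (A₁ := (compL 𝕜 E F G).flip B₁)
      ((norm_flip_compL_apply_le B₁).trans hB₁) hflip hPB₂
      (norm_comp_sub_comp_le_of_le hP₁ hP hB₂ hB)

end SecondOrderChain

section Composition

variable {𝕜 E F G : Type*} [RCLike 𝕜]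
  [NormedAddCommGroup E] [NormedSpace 𝕜 E] [NormedAddCommGroup F] [NormedSpace 𝕜 F]
  [NormedAddCommGroup G] [NormedSpace 𝕜 G]

theorem norm_iteratedFDeriv_sub_le {f : E → F} {n : ℕ} {k : WithTop ℕ∞} {C d : ℝ}
    (hf : ContDiff 𝕜 k f) (hn : n < k) (hC : ∀ y, ‖iteratedFDeriv 𝕜 (n + 1) f y‖ ≤ C) {a b : E}
    (hab : ‖a - b‖ ≤ d) :
    ‖iteratedFDeriv 𝕜 n f a - iteratedFDeriv 𝕜 n f b‖ ≤ C * d := by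
  have hC₀ : 0 ≤ C := (norm_nonneg _).trans (hC 0)
  have hlip : LipschitzWith C.toNNReal (iteratedFDeriv 𝕜 n f) :=
    lipschitzWith_of_nnnorm_fderiv_le (hf.differentiable_iteratedFDeriv hn) fun y => by
      rw [← NNReal.coe_le_coe, coe_nnnorm, Real.coe_toNNReal _ hC₀, norm_fderiv_iteratedFDeriv]
      exact hC y
  calc ‖iteratedFDeriv 𝕜 n f a - iteratedFDeriv 𝕜 n f b‖ ≤ C * ‖a - b‖ := by
        simpa [hC₀] using hlip.norm_sub_le a b
    _ ≤ C * d := by gcongr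

theorem norm_iteratedFDeriv_one_comp_sub_le {φ : F → G} {h₁ h₂ : E → F} {x : E}
    {M₁ M₂ L₁ d₀ d₁ : ℝ} (hφ : ContDiff 𝕜 2 φ) (hh₁ : DifferentiableAt 𝕜 h₁ x)
    (hh₂ : DifferentiableAt 𝕜 h₂ x) (hφ₁ : ∀ y, ‖iteratedFDeriv 𝕜 1 φ y‖ ≤ M₁)
    (hφ₂ : ∀ y, ‖iteratedFDeriv 𝕜 2 φ y‖ ≤ M₂) (hh₂₁ : ‖iteratedFDeriv 𝕜 1 h₂ x‖ ≤ L₁)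
    (hd₀ : ‖h₁ x - h₂ x‖ ≤ d₀)
    (hd₁ : ‖iteratedFDeriv 𝕜 1 h₁ x - iteratedFDeriv 𝕜 1 h₂ x‖ ≤ d₁) :
    ‖iteratedFDeriv 𝕜 1 (φ ∘ h₁) x - iteratedFDeriv 𝕜 1 (φ ∘ h₂) x‖ ≤ M₁ * d₁ + M₂ * d₀ * L₁ := by
  have hA : ‖fderiv 𝕜 φ (h₁ x) - fderiv 𝕜 φ (h₂ x)‖ ≤ M₂ * d₀ := by
    rw [← norm_iteratedFDeriv_one_sub]
    exact norm_iteratedFDeriv_sub_le hφ (by norm_num) hφ₂ hd₀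
  have hφ' : Differentiable 𝕜 φ := hφ.differentiable (by norm_num)
  simp only [norm_iteratedFDeriv_one] at hφ₁ hh₂₁
  rw [norm_iteratedFDeriv_one_sub] at hd₁ ⊢
  rw [fderiv_comp x (hφ' _) hh₁, fderiv_comp x (hφ' _) hh₂]
  exact norm_comp_sub_comp_le_of_le (hφ₁ _) hA hh₂₁ hd₁

theorem norm_iteratedFDeriv_two_comp_sub_le {φ : F → G} {h₁ h₂ : E → F} {x : E}
    {M₁ M₂ M₃ L₁ L₂ d₀ d₁ d₂ : ℝ} (hφ : ContDiff 𝕜 3 φ) (hh₁ : ContDiff 𝕜 2 h₁)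
    (hh₂ : ContDiff 𝕜 2 h₂) (hφ₁ : ∀ y, ‖iteratedFDeriv 𝕜 1 φ y‖ ≤ M₁)
    (hφ₂ : ∀ y, ‖iteratedFDeriv 𝕜 2 φ y‖ ≤ M₂) (hφ₃ : ∀ y, ‖iteratedFDeriv 𝕜 3 φ y‖ ≤ M₃)
    (hh₁₁ : ‖iteratedFDeriv 𝕜 1 h₁ x‖ ≤ L₁) (hh₂₁ : ‖iteratedFDeriv 𝕜 1 h₂ x‖ ≤ L₁)
    (hh₂₂ : ‖iteratedFDeriv 𝕜 2 h₂ x‖ ≤ L₂) (hd₀ : ‖h₁ x - h₂ x‖ ≤ d₀)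
    (hd₁ : ‖iteratedFDeriv 𝕜 1 h₁ x - iteratedFDeriv 𝕜 1 h₂ x‖ ≤ d₁)
    (hd₂ : ‖iteratedFDeriv 𝕜 2 h₁ x - iteratedFDeriv 𝕜 2 h₂ x‖ ≤ d₂) :
    ‖iteratedFDeriv 𝕜 2 (φ ∘ h₁) x - iteratedFDeriv 𝕜 2 (φ ∘ h₂) x‖ ≤
      M₁ * d₂ + M₂ * d₀ * L₂ + (L₁ * (M₂ * d₁ + M₃ * d₀ * L₁) + d₁ * (M₂ * L₁)) := by
  have hA : ‖fderiv 𝕜 φ (h₁ x) - fderiv 𝕜 φ (h₂ x)‖ ≤ M₂ * d₀ := by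
    rw [← norm_iteratedFDeriv_one_sub]
    exact norm_iteratedFDeriv_sub_le hφ (by norm_num) hφ₂ hd₀
  have hP : ‖fderiv 𝕜 (fderiv 𝕜 φ) (h₁ x) - fderiv 𝕜 (fderiv 𝕜 φ) (h₂ x)‖ ≤ M₃ * d₀ := by
    rw [← norm_iteratedFDeriv_two_sub]
    exact norm_iteratedFDeriv_sub_le hφ (by norm_num) hφ₃ hd₀
  have hDφ : Differentiable 𝕜 (fderiv 𝕜 φ) :=
    (hφ.fderiv_right (m := 2) (by norm_num)).differentiable (by norm_num)
  have hDh : ∀ h : E → F, ContDiff 𝕜 2 h → Differentiable 𝕜 (fderiv 𝕜 h) := fun h hh =>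
    (hh.fderiv_right (m := 1) (by norm_num)).differentiable (by norm_num)
  simp only [norm_iteratedFDeriv_one] at hφ₁ hh₁₁ hh₂₁
  simp only [norm_iteratedFDeriv_two] at hφ₂ hh₂₂
  rw [norm_iteratedFDeriv_one_sub] at hd₁
  rw [norm_iteratedFDeriv_two_sub] at hd₂ ⊢
  rw [fderiv_fderiv_comp (hφ.differentiable (by norm_num)) (hh₁.differentiable (by norm_num))
      (hDφ _) (hDh h₁ hh₁ x),
    fderiv_fderiv_comp (hφ.differentiable (by norm_num)) (hh₂.differentiable (by norm_num))
      (hDφ _) (hDh h₂ hh₂ x)]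
  exact norm_secondOrderChain_sub_le (hφ₁ _) hA (hφ₂ _) (hφ₂ _) hP hh₁₁ hh₂₁ hd₁ hh₂₂ hd₂

end Composition

/-- Composition estimate in `C²`: for all bounds `L₁, L₂` on the first two derivatives
of `h₁, h₂` and `M₁, M₂, M₃` on the first three derivatives of `φ`, there is `C ≥ 0`
such that `‖φ∘h₁ − φ∘h₂‖_{C²} ≤ C·(‖h₁−h₂‖_{C⁰} + ‖Dh₁−Dh₂‖_{C⁰} + ‖D²h₁−D²h₂‖_{C⁰})`
pointwise, uniformly over all such maps between normed spaces. -/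
theorem composition_C2_difference_estimate
    (L₁ L₂ M₁ M₂ M₃ : ℝ)
    (hL₁ : 0 ≤ L₁) (hL₂ : 0 ≤ L₂) (hM₁ : 0 ≤ M₁) (hM₂ : 0 ≤ M₂) (hM₃ : 0 ≤ M₃) :
    ∃ C : ℝ, 0 ≤ C ∧
      ∀ (E : Type u) (F : Type v) [NormedAddCommGroup E] [NormedSpace ℝ E]
        [NormedAddCommGroup F] [NormedSpace ℝ F]
        (h₁ h₂ : E → F) (φ : F → ℝ),
        ContDiff ℝ 2 h₁ → ContDiff ℝ 2 h₂ → ContDiff ℝ 3 φ →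
        (∀ x, ‖iteratedFDeriv ℝ 1 h₁ x‖ ≤ L₁) →
        (∀ x, ‖iteratedFDeriv ℝ 1 h₂ x‖ ≤ L₁) →
        (∀ x, ‖iteratedFDeriv ℝ 2 h₁ x‖ ≤ L₂) →
        (∀ x, ‖iteratedFDeriv ℝ 2 h₂ x‖ ≤ L₂) →
        (∀ y, ‖iteratedFDeriv ℝ 1 φ y‖ ≤ M₁) →
        (∀ y, ‖iteratedFDeriv ℝ 2 φ y‖ ≤ M₂) →
        (∀ y, ‖iteratedFDeriv ℝ 3 φ y‖ ≤ M₃) →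
        ∀ d₀ d₁ d₂ : ℝ,
          (∀ y, ‖h₁ y - h₂ y‖ ≤ d₀) →
          (∀ y, ‖iteratedFDeriv ℝ 1 h₁ y - iteratedFDeriv ℝ 1 h₂ y‖ ≤ d₁) →
          (∀ y, ‖iteratedFDeriv ℝ 2 h₁ y - iteratedFDeriv ℝ 2 h₂ y‖ ≤ d₂) →
          ∀ x : E,
            |φ (h₁ x) - φ (h₂ x)| +
                ‖iteratedFDeriv ℝ 1 (φ ∘ h₁) x - iteratedFDeriv ℝ 1 (φ ∘ h₂) x‖ +
                ‖iteratedFDeriv ℝ 2 (φ ∘ h₁) x - iteratedFDeriv ℝ 2 (φ ∘ h₂) x‖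
              ≤ C * (d₀ + d₁ + d₂) := by
  refine ⟨M₁ + 2 * M₂ * L₁ + M₂ * L₂ + M₃ * L₁ ^ 2, by positivity, ?_⟩
  intro E F _ _ _ _ h₁ h₂ φ hh₁ hh₂ hφ hDh₁ hDh₂ _ hD2h₂ hDφ hD2φ hD3φ d₀ d₁ d₂ hd₀ hd₁ hd₂ x
  have bound₀ : |φ (h₁ x) - φ (h₂ x)| ≤ M₁ * d₀ := by
    rw [← Real.norm_eq_abs, ← norm_iteratedFDeriv_zero_sub (𝕜 := ℝ)]
    exact norm_iteratedFDeriv_sub_le hφ (by norm_num) hDφ (hd₀ x)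
  have bound₁ := norm_iteratedFDeriv_one_comp_sub_le (hφ.of_le (by norm_num))
    (hh₁.differentiable (by norm_num) x) (hh₂.differentiable (by norm_num) x) hDφ hD2φ (hDh₂ x)
    (hd₀ x) (hd₁ x)
  have bound₂ := norm_iteratedFDeriv_two_comp_sub_le hφ hh₁ hh₂ hDφ hD2φ hD3φ (hDh₁ x) (hDh₂ x)
    (hD2h₂ x) (hd₀ x) (hd₁ x) (hd₂ x)
  have hd₀' : 0 ≤ d₀ := (norm_nonneg _).trans (hd₀ x)
  have hd₁' : 0 ≤ d₁ := (norm_nonneg _).trans (hd₁ x)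
  have hd₂' : 0 ≤ d₂ := (norm_nonneg _).trans (hd₂ x)
  linarith [mul_nonneg (mul_nonneg hM₂ hL₁) (add_nonneg hd₀' (mul_nonneg zero_le_two hd₂')),
    mul_nonneg (mul_nonneg hM₂ hL₂) (add_nonneg hd₁' hd₂'),
    mul_nonneg (mul_nonneg hM₃ (sq_nonneg L₁)) (add_nonneg hd₁' hd₂')]
end

section
/- Let Ω and X be nonempty compact metric spaces and 0 ≤ λ < 1. Let I be a countable index set, θ_i : Ω → Ω continuous maps, p_i : Ω → [0,∞) continuous functions with ∑_{i∈I} p_i(ω) = 1 for every ω ∈ Ω and ∑_{i∈I} sup_{ω∈Ω} p_i(ω) < ∞, and let G_i : Ω × X → X be continuous maps such that for every i ∈ I and ω ∈ Ω the map x ↦ G_i(ω,x) is Lipschitz with constant λ. Let K be the operator on sections ν : Ω → M₁(X) given by (Kν)_ω = ∑_{i∈I} p_i(ω) · (G_i(ω,·))_* ν_{θ_i(ω)}. Then the unique fixed point ν of K (which exists by the contraction property) is continuous as a map from Ω to the space of Borel probability measures on X equipped with the Wasserstein-1 distance W₁. -/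
/-
Call `c` a local bound for `ν` if, at every `ω₀`, `W₁(ν ω, ν ω₀) < c` for all `ω` near `ω₀`.
Testing the fixed-point equation against a `1`-Lipschitz `φ` with `φ x₀ = 0` bounds
`W₁(ν ω, ν ω₀)` by the sum over `i` of
  `|pᵢ ω - pᵢ ω₀| diam X + pᵢ ω₀ (sup_x d(Gᵢ(ω, x), Gᵢ(ω₀, x)) + λ W₁(ν (θᵢ ω), ν (θᵢ ω₀)))`.
The first two terms vanish as `ω → ω₀` by continuity, and the summable majorant `∑ᵢ sup pᵢ`
lets the limit pass through the series, so every local bound `c` improves to any `c' > λ c`.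
Starting from `2 diam X`, the local bounds therefore shrink geometrically to `0`.
-/
open MeasureTheory

/-- The Wasserstein-1 distance between two Borel (probability) measures on a metric
space `X`, defined via Kantorovich–Rubinstein duality. -/
noncomputable def W1 {X : Type*} [MetricSpace X] [MeasurableSpace X]
    (μ ν : Measure X) : ℝ :=
  ⨆ φ : {φ : X → ℝ // LipschitzWith 1 φ}, (∫ x, φ.1 x ∂μ) - ∫ x, φ.1 x ∂ν

open Filter Topology
open scoped NNReal

theorem Continuous.integrable_of_compactSpace {X : Type*} [TopologicalSpace X] [CompactSpace X]
    [MeasurableSpace X] [OpensMeasurableSpace X] {μ : Measure X} [IsFiniteMeasure μ]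
    {f : X → ℝ} (hf : Continuous f) : Integrable f μ :=
  hf.integrable_of_hasCompactSupport (HasCompactSupport.of_compactSpace f)

theorem abs_integral_le_of_forall_abs_le {α : Type*} [MeasurableSpace α] {μ : Measure α}
    [IsProbabilityMeasure μ] {f : α → ℝ} {C : ℝ} (h : ∀ x, |f x| ≤ C) :
    |∫ x, f x ∂μ| ≤ C := by
  simpa using norm_integral_le_of_norm_le_const (μ := μ) (f := f) (.of_forall h)

theorem integral_sub_const_sub_integral_sub_const {α : Type*} [MeasurableSpace α]
    {μ ν : Measure α} [IsProbabilityMeasure μ] [IsProbabilityMeasure ν] {f : α → ℝ}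
    (hμ : Integrable f μ) (hν : Integrable f ν) (c : ℝ) :
    (∫ x, (f x - c) ∂μ) - ∫ x, (f x - c) ∂ν = (∫ x, f x ∂μ) - ∫ x, f x ∂ν := by
  rw [integral_sub hμ (integrable_const c), integral_sub hν (integrable_const c)]
  simp

theorem integral_sum_smul_map {α β ι : Type*} [MeasurableSpace α] [MeasurableSpace β]
    {w : ι → ℝ} (hw : ∀ i, 0 ≤ w i) {m : ι → Measure α} {g : ι → α → β}
    (hg : ∀ i, AEMeasurable (g i) (m i)) {f : β → ℝ} (hf : StronglyMeasurable f)
    (hint : Integrable f (Measure.sum fun i => ENNReal.ofReal (w i) • (m i).map (g i))) :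
    ∫ y, f y ∂(Measure.sum fun i => ENNReal.ofReal (w i) • (m i).map (g i))
      = ∑' i, w i * ∫ x, f (g i x) ∂(m i) := by
  rw [integral_sum_measure hint]
  refine tsum_congr fun i => ?_
  rw [integral_smul_measure, ENNReal.toReal_ofReal (hw i),
    integral_map (hg i) hf.aestronglyMeasurable, smul_eq_mul]

theorem eventually_tsum_lt_of_dominated {α ι : Type*} {l : Filter α} {t : ι → α → ℝ}
    {b bound : ι → ℝ} (hbound : Summable bound) (ht : ∀ i a, |t i a| ≤ bound i)
    (hb : Summable b) (hlim : ∀ i, ∀ c > b i, ∀ᶠ a in l, t i a < c) {c : ℝ}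
    (hc : ∑' i, b i < c) :
    ∀ᶠ a in l, ∑' i, t i a < c := by
  have hmax_le : ∀ i a, |max (t i a) (b i)| ≤ bound i + |b i| := fun i a =>
    abs_max_le_max_abs_abs.trans (max_le ((ht i a).trans (le_add_of_nonneg_right (abs_nonneg _)))
      (le_add_of_nonneg_left ((abs_nonneg _).trans (ht i a))))
  -- Tannery's theorem applies to `max (t i) (b i)`, which tends to `b i` by `hlim`.
  have hmax : Tendsto (fun a => ∑' i, max (t i a) (b i)) l (𝓝 (∑' i, b i)) := by
    refine tendsto_tsum_of_dominated_convergence (hbound.add hb.abs) (fun i => ?_)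
      (Eventually.of_forall fun a i => hmax_le i a)
    exact tendsto_order.2 ⟨fun c hc => .of_forall fun a => hc.trans_le (le_max_right _ _),
      fun c hc => (hlim i c hc).mono fun a ha => max_lt ha hc⟩
  filter_upwards [hmax.eventually (gt_mem_nhds hc)] with a ha
  refine lt_of_le_of_lt (Summable.tsum_le_tsum (fun i => le_max_left _ _) ?_ ?_) ha
  · exact hbound.of_norm_bounded (ht · a)
  · exact (hbound.add hb.abs).of_norm_bounded (hmax_le · a)

theorem tendsto_zero_of_forall_eventually_lt_mul {α β : Type*} {l : β → Filter α}
    {f : α → β → ℝ} {K C : ℝ} (hK0 : 0 ≤ K) (hK1 : K < 1) (hf0 : ∀ a b, 0 ≤ f a b)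
    (hfC : ∀ a b, f a b ≤ C)
    (hstep : ∀ c, (∀ b, ∀ᶠ a in l b, f a b < c) → ∀ c' > K * c, ∀ b, ∀ᶠ a in l b, f a b < c')
    (b : β) : Tendsto (f · b) (l b) (𝓝 0) := by
  obtain ⟨κ, hKκ, hκ1⟩ := exists_between hK1
  have hκ0 : 0 < κ := hK0.trans_lt hKκ
  have hC : 0 < |C| + 1 := by positivity
  have hbound : ∀ n : ℕ, ∀ b, ∀ᶠ a in l b, f a b < κ ^ n * (|C| + 1) := by
    intro n
    induction n with
    | zero =>
      refine fun b => .of_forall fun a => ?_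
      simpa using (hfC a b).trans_lt ((le_abs_self C).trans_lt (lt_add_one _))
    | succ n ih =>
      refine hstep _ ih _ ?_
      rw [pow_succ, mul_right_comm, mul_comm K]
      exact mul_lt_mul_of_pos_left hKκ (by positivity)
  refine tendsto_order.2 ⟨fun c hc => .of_forall fun a => hc.trans_le (hf0 a b), fun c hc => ?_⟩
  obtain ⟨n, hn⟩ := exists_pow_lt_of_lt_one (div_pos hc hC) hκ1
  exact (hbound n b).mono fun a ha => ha.trans ((lt_div_iff₀ hC).1 hn)

section Wasserstein

variable {X : Type*} [MetricSpace X] [CompactSpace X] [MeasurableSpace X] [BorelSpace X]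
  {μ ν : Measure X} [IsProbabilityMeasure μ] [IsProbabilityMeasure ν]

omit [MeasurableSpace X] [BorelSpace X] in
theorem abs_le_diam_of_lipschitzWith_one {φ : X → ℝ} (hφ : LipschitzWith 1 φ) {x₀ : X}
    (h₀ : φ x₀ = 0) (x : X) : |φ x| ≤ Metric.diam (Set.univ : Set X) := by
  have h := hφ.dist_le_mul x x₀
  rw [Real.dist_eq, h₀, sub_zero, NNReal.coe_one, one_mul] at h
  exact h.trans (Metric.dist_le_diam_of_mem isCompact_univ.isBounded trivial trivial)

theorem integral_sub_integral_le_two_mul_diam_s14 {φ : X → ℝ} (hφ : LipschitzWith 1 φ) :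
    (∫ x, φ x ∂μ) - ∫ x, φ x ∂ν ≤ 2 * Metric.diam (Set.univ : Set X) := by
  obtain ⟨x₀⟩ := nonempty_of_isProbabilityMeasure μ
  have hψ : LipschitzWith 1 fun x => φ x - φ x₀ := by
    simpa using hφ.sub (LipschitzWith.const (φ x₀))
  have hbound := abs_le_diam_of_lipschitzWith_one hψ (sub_self _)
  rw [← integral_sub_const_sub_integral_sub_const hφ.continuous.integrable_of_compactSpace
    hφ.continuous.integrable_of_compactSpace (φ x₀)]
  linarith [(abs_le.1 (abs_integral_le_of_forall_abs_le (μ := μ) hbound)).2,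
    (abs_le.1 (abs_integral_le_of_forall_abs_le (μ := ν) hbound)).1]

theorem integral_sub_integral_le_W1 {φ : X → ℝ} (hφ : LipschitzWith 1 φ) :
    (∫ x, φ x ∂μ) - ∫ x, φ x ∂ν ≤ W1 μ ν :=
  le_ciSup (f := fun φ : {φ : X → ℝ // LipschitzWith 1 φ} => (∫ x, φ.1 x ∂μ) - ∫ x, φ.1 x ∂ν)
    ⟨_, Set.forall_mem_range.2 fun φ => integral_sub_integral_le_two_mul_diam_s14 φ.2⟩ ⟨φ, hφ⟩

theorem W1_nonneg : 0 ≤ W1 μ ν := by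
  simpa using integral_sub_integral_le_W1 (μ := μ) (ν := ν) (LipschitzWith.const' (0 : ℝ))

theorem W1_le_of_forall_lipschitzWith_eq_zero {C : ℝ} (x₀ : X)
    (h : ∀ φ : X → ℝ, LipschitzWith 1 φ → φ x₀ = 0 → (∫ x, φ x ∂μ) - ∫ x, φ x ∂ν ≤ C) :
    W1 μ ν ≤ C := by
  have : Nonempty {φ : X → ℝ // LipschitzWith 1 φ} := ⟨⟨0, LipschitzWith.const' 0⟩⟩
  refine ciSup_le fun ⟨φ, hφ⟩ => ?_
  rw [← integral_sub_const_sub_integral_sub_const hφ.continuous.integrable_of_compactSpace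
    hφ.continuous.integrable_of_compactSpace (φ x₀)]
  exact h _ (by simpa using hφ.sub (LipschitzWith.const (φ x₀))) (sub_self _)

theorem W1_le_two_mul_diam : W1 μ ν ≤ 2 * Metric.diam (Set.univ : Set X) := by
  have : Nonempty {φ : X → ℝ // LipschitzWith 1 φ} := ⟨⟨0, LipschitzWith.const' 0⟩⟩
  exact ciSup_le fun φ => integral_sub_integral_le_two_mul_diam_s14 φ.2

theorem integral_sub_integral_le_mul_W1 {K : ℝ≥0} {ψ : X → ℝ} (hψ : LipschitzWith K ψ) :
    (∫ x, ψ x ∂μ) - ∫ x, ψ x ∂ν ≤ K * W1 μ ν := by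
  rcases eq_or_ne K 0 with rfl | hK
  · obtain ⟨x₀⟩ := nonempty_of_isProbabilityMeasure μ
    have hconst : ∀ x, ψ x = ψ x₀ := fun x => dist_le_zero.1 (by simpa using hψ.dist_le_mul x x₀)
    simp [hconst]
  · have hK' : (0 : ℝ) < K := by positivity
    have h₁ : LipschitzWith 1 fun x => (K : ℝ)⁻¹ * ψ x := .of_dist_le_mul fun x y => by
      rw [Real.dist_eq, ← mul_sub, abs_mul, abs_inv, abs_of_pos hK', ← Real.dist_eq,
        NNReal.coe_one, one_mul, inv_mul_le_iff₀ hK']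
      exact hψ.dist_le_mul x y
    have h := integral_sub_integral_le_W1 (μ := μ) (ν := ν) h₁
    rwa [integral_const_mul, integral_const_mul, ← mul_sub, inv_mul_le_iff₀ hK'] at h

theorem integral_comp_sub_integral_comp_le_dist {Y : Type*} [MetricSpace Y] {φ : Y → ℝ}
    (hφ : LipschitzWith 1 φ) (f f' : C(X, Y)) :
    (∫ x, φ (f x) ∂μ) - ∫ x, φ (f' x) ∂μ ≤ dist f f' := by
  have hint : ∀ f : C(X, Y), Integrable (fun x => φ (f x)) μ := fun f =>
    (hφ.continuous.comp f.continuous).integrable_of_compactSpace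
  rw [← integral_sub (hint f) (hint f')]
  calc ∫ x, (φ (f x) - φ (f' x)) ∂μ ≤ ∫ _, dist f f' ∂μ :=
        integral_mono ((hint f).sub (hint f')) (integrable_const _) fun x =>
          calc φ (f x) - φ (f' x) ≤ dist (φ (f x)) (φ (f' x)) := le_abs_self _
            _ ≤ dist (f x) (f' x) := by simpa using hφ.dist_le_mul (f x) (f' x)
            _ ≤ dist f f' := f.dist_apply_le_dist x
    _ = dist f f' := by simp

end Wasserstein

def IsInvariantSection {Ω X I : Type*} [TopologicalSpace X] [MeasurableSpace X]
    (p : I → Ω → ℝ) (θ : I → Ω → Ω) (g : I → Ω → C(X, X)) (ν : Ω → Measure X) : Prop :=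
  ∀ ω, ν ω = Measure.sum fun i => ENNReal.ofReal (p i ω) • (ν (θ i ω)).map (g i ω)

section TransferBound

variable {Ω X I : Type*} [MetricSpace X] [CompactSpace X] [MeasurableSpace X]
  {p : I → Ω → ℝ} {θ : I → Ω → Ω} {g : I → Ω → C(X, X)} {ν : Ω → Measure X} {K : ℝ≥0}

variable (p θ g ν K) in
noncomputable def transferBound (i : I) (ω ω₀ : Ω) : ℝ :=
  |p i ω - p i ω₀| * Metric.diam (Set.univ : Set X)
    + p i ω₀ * (dist (g i ω) (g i ω₀) + K * W1 (ν (θ i ω)) (ν (θ i ω₀)))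

theorem eventually_transferBound_lt [TopologicalSpace Ω] {i : I} (hθ : Continuous (θ i))
    (hpc : Continuous (p i)) (hp0 : ∀ ω, 0 ≤ p i ω) (hgc : Continuous (g i)) {ω₀ : Ω} {c : ℝ}
    (hc : ∀ᶠ ω in 𝓝 (θ i ω₀), W1 (ν ω) (ν (θ i ω₀)) < c) {b : ℝ} (hb : p i ω₀ * (K * c) < b) :
    ∀ᶠ ω in 𝓝 ω₀, transferBound p θ g ν K i ω ω₀ < b := by
  have hsmall : Tendsto (fun ω => |p i ω - p i ω₀| * Metric.diam (Set.univ : Set X)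
      + p i ω₀ * dist (g i ω) (g i ω₀)) (𝓝 ω₀) (𝓝 0) := by
    have hp : Tendsto (fun ω => |p i ω - p i ω₀|) (𝓝 ω₀) (𝓝 0) := by
      simpa using ((hpc.tendsto ω₀).sub_const (p i ω₀)).abs
    have hg : Tendsto (fun ω => dist (g i ω) (g i ω₀)) (𝓝 ω₀) (𝓝 0) :=
      tendsto_iff_dist_tendsto_zero.1 (hgc.tendsto ω₀)
    simpa using (hp.mul_const _).add (hg.const_mul (p i ω₀))
  filter_upwards [hsmall.eventually (gt_mem_nhds (sub_pos.2 hb)),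
    hθ.tendsto ω₀ |>.eventually hc] with ω hω hWc
  have : p i ω₀ * (K * W1 (ν (θ i ω)) (ν (θ i ω₀))) ≤ p i ω₀ * (K * c) := by
    have := hp0 ω₀
    gcongr
  simp only [transferBound]
  linarith

variable [BorelSpace X] [∀ ω, IsProbabilityMeasure (ν ω)]

theorem transferBound_nonneg (hp0 : ∀ i ω, 0 ≤ p i ω) (i : I) (ω ω₀ : Ω) :
    0 ≤ transferBound p θ g ν K i ω ω₀ :=
  add_nonneg (mul_nonneg (abs_nonneg _) Metric.diam_nonneg)
    (mul_nonneg (hp0 i ω₀) (add_nonneg dist_nonneg (mul_nonneg K.2 W1_nonneg)))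

theorem transferBound_le (hK : K ≤ 1) (hp0 : ∀ i ω, 0 ≤ p i ω) {i : I} {ω ω₀ : Ω} {q : ℝ}
    (hq : p i ω ≤ q) (hq₀ : p i ω₀ ≤ q) :
    transferBound p θ g ν K i ω ω₀ ≤ q * (4 * Metric.diam (Set.univ : Set X)) := by
  have hD : 0 ≤ Metric.diam (Set.univ : Set X) := Metric.diam_nonneg
  have hp : |p i ω - p i ω₀| ≤ q := by
    simpa using abs_sub_le_of_le_of_le (hp0 i ω) hq (hp0 i ω₀) hq₀
  have hg : dist (g i ω) (g i ω₀) ≤ Metric.diam (Set.univ : Set X) :=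
    (ContinuousMap.dist_le hD).2 fun x =>
      Metric.dist_le_diam_of_mem isCompact_univ.isBounded trivial trivial
  have hW : K * W1 (ν (θ i ω)) (ν (θ i ω₀)) ≤ 2 * Metric.diam (Set.univ : Set X) :=
    (mul_le_of_le_one_left W1_nonneg hK).trans W1_le_two_mul_diam
  calc transferBound p θ g ν K i ω ω₀
      ≤ q * Metric.diam (Set.univ : Set X)
        + q * (Metric.diam (Set.univ : Set X) + 2 * Metric.diam (Set.univ : Set X)) :=
        add_le_add (mul_le_mul_of_nonneg_right hp hD) (mul_le_mul hq₀ (add_le_add hg hW)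
          (add_nonneg dist_nonneg (mul_nonneg K.2 W1_nonneg)) ((hp0 i ω₀).trans hq₀))
    _ = q * (4 * Metric.diam (Set.univ : Set X)) := by ring

end TransferBound

namespace IsInvariantSection

variable {Ω X I : Type*} [MetricSpace X] [CompactSpace X] [MeasurableSpace X] [BorelSpace X]
  {p : I → Ω → ℝ} {θ : I → Ω → Ω} {g : I → Ω → C(X, X)} {ν : Ω → Measure X}
  [∀ ω, IsProbabilityMeasure (ν ω)] {K : ℝ≥0}

theorem integral_eq_tsum (hν : IsInvariantSection p θ g ν) (hp0 : ∀ i ω, 0 ≤ p i ω)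
    {φ : X → ℝ} (hφ : Continuous φ) (ω : Ω) :
    ∫ x, φ x ∂(ν ω) = ∑' i, p i ω * ∫ x, φ (g i ω x) ∂(ν (θ i ω)) := by
  have hint : Integrable φ (ν ω) := hφ.integrable_of_compactSpace
  rw [hν ω] at hint ⊢
  exact integral_sum_smul_map (hp0 · ω) (fun i => (g i ω).continuous.aemeasurable)
    hφ.stronglyMeasurable hint

theorem W1_le_tsum (hν : IsInvariantSection p θ g ν) (hp0 : ∀ i ω, 0 ≤ p i ω)
    (hpsum : ∀ ω, Summable (p · ω)) (hg : ∀ i ω, LipschitzWith K (g i ω)) (ω ω₀ : Ω)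
    (hsum : Summable fun i => transferBound p θ g ν K i ω ω₀) :
    W1 (ν ω) (ν ω₀) ≤ ∑' i, transferBound p θ g ν K i ω ω₀ := by
  obtain ⟨x₀⟩ := nonempty_of_isProbabilityMeasure (ν ω)
  refine W1_le_of_forall_lipschitzWith_eq_zero x₀ fun φ hφ hφ₀ => ?_
  set A : I → Ω → ℝ := fun i ω' => ∫ x, φ (g i ω' x) ∂(ν (θ i ω'))
  have hA : ∀ i ω', |A i ω'| ≤ Metric.diam (Set.univ : Set X) := fun i ω' =>
    abs_integral_le_of_forall_abs_le fun x => abs_le_diam_of_lipschitzWith_one hφ hφ₀ _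
  have hsummable : ∀ ω', Summable fun i => p i ω' * A i ω' := fun ω' =>
    ((hpsum ω').mul_right _).of_norm_bounded fun i => by
      rw [Real.norm_eq_abs, abs_mul, abs_of_nonneg (hp0 i ω')]
      exact mul_le_mul_of_nonneg_left (hA i ω') (hp0 i ω')
  rw [hν.integral_eq_tsum hp0 hφ.continuous, hν.integral_eq_tsum hp0 hφ.continuous,
    ← (hsummable ω).tsum_sub (hsummable ω₀)]
  refine ((hsummable ω).sub (hsummable ω₀)).tsum_le_tsum (fun i => ?_) hsum
  have hA_sub : A i ω - A i ω₀ ≤ dist (g i ω) (g i ω₀) + K * W1 (ν (θ i ω)) (ν (θ i ω₀)) := by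
    have hfibre := integral_comp_sub_integral_comp_le_dist (μ := ν (θ i ω)) hφ (g i ω) (g i ω₀)
    have hbase := integral_sub_integral_le_mul_W1 (μ := ν (θ i ω)) (ν := ν (θ i ω₀))
      (hφ.comp (hg i ω₀))
    simp only [Function.comp_def, one_mul] at hbase
    simp only [A]
    linarith
  calc p i ω * A i ω - p i ω₀ * A i ω₀
      = (p i ω - p i ω₀) * A i ω + p i ω₀ * (A i ω - A i ω₀) := by ring
    _ ≤ transferBound p θ g ν K i ω ω₀ := by
      refine add_le_add ?_ (mul_le_mul_of_nonneg_left hA_sub (hp0 i ω₀))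
      exact (le_abs_self _).trans ((abs_mul _ _).trans_le
        (mul_le_mul_of_nonneg_left (hA i ω) (abs_nonneg _)))

theorem eventually_W1_lt [TopologicalSpace Ω] [CompactSpace Ω]
    (hν : IsInvariantSection p θ g ν) (hK : K ≤ 1)
    (hθ : ∀ i, Continuous (θ i)) (hpc : ∀ i, Continuous (p i)) (hp0 : ∀ i ω, 0 ≤ p i ω)
    (hp1 : ∀ ω, ∑' i, p i ω = 1) (hps : Summable fun i => ⨆ ω, p i ω)
    (hgc : ∀ i, Continuous (g i)) (hg : ∀ i ω, LipschitzWith K (g i ω)) {c : ℝ}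
    (hc : ∀ ω₀, ∀ᶠ ω in 𝓝 ω₀, W1 (ν ω) (ν ω₀) < c) {c' : ℝ} (hc' : K * c < c') (ω₀ : Ω) :
    ∀ᶠ ω in 𝓝 ω₀, W1 (ν ω) (ν ω₀) < c' := by
  have hpq : ∀ i ω, p i ω ≤ ⨆ ω, p i ω := fun i ω =>
    le_ciSup (isCompact_range (hpc i)).bddAbove ω
  have hpsum : ∀ ω, Summable (p · ω) := fun ω => hps.of_nonneg_of_le (hp0 · ω) (hpq · ω)
  have hdom : ∀ i ω, |transferBound p θ g ν K i ω ω₀|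
      ≤ (⨆ ω, p i ω) * (4 * Metric.diam (Set.univ : Set X)) := fun i ω => by
    rw [abs_of_nonneg (transferBound_nonneg hp0 i ω ω₀)]
    exact transferBound_le hK hp0 (hpq i ω) (hpq i ω₀)
  have hlimit : ∑' i, p i ω₀ * (K * c) = K * c := by rw [_root_.tsum_mul_right, hp1, one_mul]
  filter_upwards [eventually_tsum_lt_of_dominated (hps.mul_right _) hdom
    ((hpsum ω₀).mul_right _)
    (fun i b hb => eventually_transferBound_lt (hθ i) (hpc i) (hp0 i) (hgc i) (hc (θ i ω₀)) hb)
    (hlimit ▸ hc')] with ω hω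
  exact (hν.W1_le_tsum hp0 hpsum hg ω ω₀
    ((hps.mul_right _).of_norm_bounded (hdom · ω))).trans_lt hω

end IsInvariantSection

theorem invariant_section_continuous_general
    {Ω X I : Type*} [MetricSpace Ω] [CompactSpace Ω]
    [MetricSpace X] [CompactSpace X]
    [MeasurableSpace X] [BorelSpace X]
    (lam : ℝ) (hlam0 : 0 ≤ lam) (hlam1 : lam < 1)
    (θ : I → Ω → Ω) (hθ : ∀ i, Continuous (θ i))
    (p : I → Ω → ℝ) (hpc : ∀ i, Continuous (p i))
    (hp0 : ∀ i ω, 0 ≤ p i ω) (hp1 : ∀ ω, ∑' i, p i ω = 1)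
    (hps : Summable fun i => ⨆ ω : Ω, p i ω)
    (G : I → Ω × X → X) (hGc : ∀ i, Continuous (G i))
    (hGlip : ∀ (i : I) (ω : Ω) (x y : X),
      dist (G i (ω, x)) (G i (ω, y)) ≤ lam * dist x y)
    (ν : Ω → Measure X) (hν : ∀ ω, IsProbabilityMeasure (ν ω))
    (hfix : ∀ ω, ν ω
      = Measure.sum fun i =>
          ENNReal.ofReal (p i ω) • ((ν (θ i ω)).map fun x => G i (ω, x))) :
    ∀ ω₀ : Ω, Filter.Tendsto (fun ω => W1 (ν ω) (ν ω₀)) (nhds ω₀) (nhds 0) := by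
  let g : I → Ω → C(X, X) := fun i => (ContinuousMap.mk (G i) (hGc i)).curry
  have hinv : IsInvariantSection p θ g ν := hfix
  have hlam : (lam.toNNReal : ℝ) = lam := Real.coe_toNNReal lam hlam0
  have hg : ∀ i ω, LipschitzWith lam.toNNReal (g i ω) := fun i ω =>
    .of_dist_le_mul fun x y => by rw [hlam]; exact hGlip i ω x y
  refine tendsto_zero_of_forall_eventually_lt_mul hlam0 hlam1 (fun _ _ => W1_nonneg)
    (fun _ _ => W1_le_two_mul_diam) fun c hc c' hc' => ?_
  exact hinv.eventually_W1_lt (by simpa [← NNReal.coe_le_one, hlam] using hlam1.le) hθ hpc hp0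
    hp1 hps (fun i => ContinuousMap.continuous _) hg hc (by rwa [hlam])

/-- Continuity of the invariant section: under continuity of the branches `θ_i`, of the
weights `p_i` (with `∑_i p_i ≡ 1` and `∑_i sup_ω p_i(ω) < ∞`) and of the fibre maps
`G_i`, each of which is `λ`-Lipschitz in the fibre variable for some `0 ≤ λ < 1`, the
unique fixed point `ν` of the sectional transfer operator
`(Kν)_ω = ∑_i p_i(ω)·(G_i(ω,·))_* ν_{θ_i(ω)}` is continuous from `Ω` to the probability
measures on `X` with the Wasserstein-1 distance. -/
theorem invariant_section_continuous
    {Ω X I : Type*} [MetricSpace Ω] [CompactSpace Ω] [Nonempty Ω]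
    [MetricSpace X] [CompactSpace X] [Nonempty X]
    [MeasurableSpace X] [BorelSpace X] [Countable I]
    (lam : ℝ) (hlam0 : 0 ≤ lam) (hlam1 : lam < 1)
    (θ : I → Ω → Ω) (hθ : ∀ i, Continuous (θ i))
    (p : I → Ω → ℝ) (hpc : ∀ i, Continuous (p i))
    (hp0 : ∀ i ω, 0 ≤ p i ω) (hp1 : ∀ ω, ∑' i, p i ω = 1)
    (hps : Summable fun i => ⨆ ω : Ω, p i ω)
    (G : I → Ω × X → X) (hGc : ∀ i, Continuous (G i))
    (hGlip : ∀ (i : I) (ω : Ω) (x y : X),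
      dist (G i (ω, x)) (G i (ω, y)) ≤ lam * dist x y)
    (ν : Ω → Measure X) (hν : ∀ ω, IsProbabilityMeasure (ν ω))
    (hfix : ∀ ω, ν ω
      = Measure.sum fun i =>
          ENNReal.ofReal (p i ω) • ((ν (θ i ω)).map fun x => G i (ω, x))) :
    ∀ ω₀ : Ω, Filter.Tendsto (fun ω => W1 (ν ω) (ν ω₀)) (nhds ω₀) (nhds 0) :=
  invariant_section_continuous_general lam hlam0 hlam1 θ hθ p hpc hp0 hp1 hps G hGc hGlip ν hν hfix
end
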